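/- (Generalized cut-set bound separating both source nodes from a terminal.) Under the memoryless action-dependent source setup, let M = g(X^n, Y^n) for any deterministic map g into a finite set. Then H(M) + H(X^n, Y^n | M) ≥ Σ_{i=1}^n [ I(X_i ; A_i) + H(X_i, Y_i | A_i) ]. -/

import Mathlib

/-!
Since `M` is a function of `(Xⁿ, Yⁿ)`, the left side is just `H(Xⁿ, Yⁿ)`, and the inequality
is in fact an equality. By the chain rule `H(Xⁿ, Yⁿ) = H(Xⁿ) + H(Yⁿ | Xⁿ)`; the first term is
`∑ H(X_i)` because the source is i.i.d., and the second is `∑ H(Y_i | X_i, A_i)` because, given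
`Xⁿ`, the outputs are independent and `Y_i` depends on `Xⁿ` only through `(X_i, A_i)`. On the
other side, `I(X_i; A_i) + H(X_i, Y_i | A_i) = H(X_i) + H(Y_i | X_i, A_i)`.
-/

open Finset

/-- Probability that the random variable `X` takes the value `s`, under the pmf `p`. -/
noncomputable def probOf {Ω S : Type*} [Fintype Ω] [DecidableEq S]
    (p : Ω → ℝ) (X : Ω → S) (s : S) : ℝ :=
  ∑ ω : Ω, if X ω = s then p ω else 0

/-- Base-2 Shannon entropy of the random variable `X` under the pmf `p`. -/
noncomputable def ent {Ω S : Type*} [Fintype Ω] [Fintype S] [DecidableEq S]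
    (p : Ω → ℝ) (X : Ω → S) : ℝ :=
  ∑ s : S, Real.negMulLog (probOf p X s) / Real.log 2

/-- Conditional entropy `H(X | Y)` (base 2). -/
noncomputable def condEnt {Ω S T : Type*} [Fintype Ω] [Fintype S] [Fintype T]
    [DecidableEq S] [DecidableEq T] (p : Ω → ℝ) (X : Ω → S) (Y : Ω → T) : ℝ :=
  ent p (fun ω => (X ω, Y ω)) - ent p Y

/-- Mutual information `I(X ; Y)` (base 2). -/
noncomputable def mutInfo {Ω S T : Type*} [Fintype Ω] [Fintype S] [Fintype T]
    [DecidableEq S] [DecidableEq T] (p : Ω → ℝ) (X : Ω → S) (Y : Ω → T) : ℝ :=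
  ent p X + ent p Y - ent p (fun ω => (X ω, Y ω))

/-- Joint pmf of `(X^n, Y^n)` in the memoryless action-dependent source setup:
`X^n` i.i.d. `∼ μ`, `A^n = f X^n`, and conditionally on `X^n = x^n` the coordinates of `Y^n`
are independent with `Y_i ∼ W (x_i) (f x^n i)`. -/
noncomputable def jointPmf {n : ℕ} {𝒳 𝒜 𝒴 : Type*}
    (μ : 𝒳 → ℝ) (f : (Fin n → 𝒳) → (Fin n → 𝒜)) (W : 𝒳 → 𝒜 → 𝒴 → ℝ) :
    (Fin n → 𝒳) × (Fin n → 𝒴) → ℝ :=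
  fun ω => (∏ i, μ (ω.1 i)) * ∏ i, W (ω.1 i) (f ω.1 i) (ω.2 i)

open Real

section ProductSums

variable {ι S : Type*} [Fintype ι] [DecidableEq ι]

theorem prod_update_eq_mul_prod_erase {β M : Type*} [CommMonoid M] (G : ι → β → M) (t : ι → β)
    (i : ι) (u : β) :
    ∏ j, G j (Function.update t i u j) = G i u * ∏ j ∈ univ.erase i, G j (t j) := by
  rw [← mul_prod_erase univ _ (mem_univ i), Function.update_self]
  congr 1
  exact prod_congr rfl fun j hj => by rw [Function.update_of_ne (ne_of_mem_erase hj)]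

variable [Fintype S]

theorem sum_pi_mul_prod_erase (t : ι → S → ℝ) (i : ι) (u : S → ℝ) :
    ∑ w : ι → S, u (w i) * ∏ j ∈ univ.erase i, t j (w j)
      = (∑ s, u s) * ∏ j ∈ univ.erase i, ∑ s, t j s :=
  calc ∑ w : ι → S, u (w i) * ∏ j ∈ univ.erase i, t j (w j)
      = ∑ w : ι → S, ∏ j, Function.update t i u j (w j) := sum_congr rfl fun w _ =>
        (prod_update_eq_mul_prod_erase (fun j φ => φ (w j)) t i u).symm
    _ = ∏ j, ∑ s, Function.update t i u j s := (Fintype.prod_sum _).symm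
    _ = (∑ s, u s) * ∏ j ∈ univ.erase i, ∑ s, t j s :=
        prod_update_eq_mul_prod_erase (fun _ φ => ∑ s, φ s) t i u

variable {t : ι → S → ℝ}

theorem sum_pi_prod_eq_one (ht : ∀ j, ∑ s, t j s = 1) : ∑ w : ι → S, ∏ j, t j (w j) = 1 := by
  simp [← Fintype.prod_sum, ht]

theorem probOf_pi_apply [DecidableEq S] (ht : ∀ j, ∑ s, t j s = 1) (i : ι) (s : S) :
    probOf (fun w : ι → S => ∏ j, t j (w j)) (fun w => w i) s = t i s := by
  have hfactor : ∀ w : ι → S, (if w i = s then ∏ j, t j (w j) else 0)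
      = (if w i = s then t i (w i) else 0) * ∏ j ∈ univ.erase i, t j (w j) := by
    intro w
    split_ifs
    · exact (mul_prod_erase univ (fun j => t j (w j)) (mem_univ i)).symm
    · rw [zero_mul]
  simp only [probOf, hfactor]
  exact (sum_pi_mul_prod_erase t i (fun s' => if s' = s then t i s' else 0)).trans (by simp [ht])

theorem negMulLog_prod {α : Type*} [DecidableEq α] (s : Finset α) (r : α → ℝ) :
    negMulLog (∏ j ∈ s, r j) = ∑ j ∈ s, negMulLog (r j) * ∏ k ∈ s.erase j, r k := by
  induction s using Finset.induction_on with
  | empty => simp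
  | insert a s ha ih =>
    rw [prod_insert ha, negMulLog_mul, sum_insert ha, ih, mul_sum, erase_insert ha]
    congr 1
    · ring
    refine sum_congr rfl fun j hj => ?_
    rw [erase_insert_of_ne (by rintro rfl; exact ha hj),
      prod_insert fun h => ha (mem_of_mem_erase h)]
    ring

theorem sum_negMulLog_pi_prod (ht : ∀ j, ∑ s, t j s = 1) :
    ∑ w : ι → S, negMulLog (∏ j, t j (w j)) = ∑ j, ∑ s, negMulLog (t j s) := by
  simp_rw [negMulLog_prod]
  rw [sum_comm]
  refine sum_congr rfl fun j _ => ?_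
  exact (sum_pi_mul_prod_erase t j (fun s => negMulLog (t j s))).trans (by simp [ht])

end ProductSums

section Entropy

variable {Ω S T : Type*} [Fintype Ω] [DecidableEq S] [DecidableEq T]

theorem probOf_id [DecidableEq Ω] (p : Ω → ℝ) (ω : Ω) : probOf p (fun ω => ω) ω = p ω := by
  simp [probOf]

theorem probOf_pair_comp (p : Ω → ℝ) (X : Ω → S) (h : S → T) (s : S) (t : T) :
    probOf p (fun ω => (X ω, h (X ω))) (s, t) = if h s = t then probOf p X s else 0 := by
  split_ifs with hst
  · refine sum_congr rfl fun ω _ => ?_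
    simp only [Prod.mk.injEq]
    by_cases hX : X ω = s
    · simp [hX, hst]
    · simp [hX]
  · refine sum_eq_zero fun ω _ => ?_
    simp only [Prod.mk.injEq]
    exact if_neg fun hω : X ω = s ∧ h (X ω) = t => hst (hω.1 ▸ hω.2)

variable [Fintype S] [Fintype T]

theorem ent_eq_of_probOf_eq (p : Ω → ℝ) (X : Ω → S) {r : S → ℝ} (h : ∀ s, probOf p X s = r s) :
    ent p X = ∑ s, negMulLog (r s) / log 2 := by
  simp only [ent, h]

theorem sum_probOf_mul (p : Ω → ℝ) (X : Ω → S) (φ : S → ℝ) :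
    ∑ s, probOf p X s * φ s = ∑ ω, p ω * φ (X ω) := by
  simp only [probOf, sum_mul, ite_mul, zero_mul]
  rw [sum_comm]
  simp

theorem ent_pair_comp (p : Ω → ℝ) (X : Ω → S) (h : S → T) :
    ent p (fun ω => (X ω, h (X ω))) = ent p X := by
  rw [ent, Fintype.sum_prod_type]
  simp [probOf_pair_comp, apply_ite negMulLog, ite_div, ent]

theorem ent_comp_equiv (p : Ω → ℝ) (X : Ω → S) (e : S ≃ T) :
    ent p (fun ω => e (X ω)) = ent p X := by
  have h : ∀ t, probOf p (fun ω => e (X ω)) t = probOf p X (e.symm t) := by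
    intro t
    simp [probOf, ← Equiv.eq_symm_apply]
  rw [ent_eq_of_probOf_eq p _ h, ent]
  exact e.symm.sum_comp (fun s => negMulLog (probOf p X s) / log 2)

theorem ent_pair_eq_add (p : Ω → ℝ) (U : Ω → S) (V : Ω → T) {K : S → T → ℝ}
    (hK : ∀ s, ∑ t, K s t = 1)
    (hUV : ∀ s t, probOf p (fun ω => (U ω, V ω)) (s, t) = probOf p U s * K s t) :
    ent p (fun ω => (U ω, V ω))
      = ent p U + ∑ s, probOf p U s * ∑ t, negMulLog (K s t) / log 2 := by
  simp only [ent, Fintype.sum_prod_type, hUV, negMulLog_mul, add_div, sum_add_distrib,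
    ← sum_div, ← sum_mul, hK, one_mul, ← mul_sum, mul_div_assoc]

end Entropy

section ActionDependentSource

variable {n : ℕ} {𝒳 𝒜 𝒴 : Type*} [Fintype 𝒳] [Fintype 𝒴]
  {μ : 𝒳 → ℝ} {f : (Fin n → 𝒳) → (Fin n → 𝒜)} {W : 𝒳 → 𝒜 → 𝒴 → ℝ}

noncomputable def channelEnt (W : 𝒳 → 𝒜 → 𝒴 → ℝ) (x : 𝒳) (a : 𝒜) : ℝ :=
  ∑ y, negMulLog (W x a y) / log 2

theorem probOf_jointPmf_comp_fst {S : Type*} [DecidableEq S] (hW1 : ∀ x a, ∑ y, W x a y = 1)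
    (φ : (Fin n → 𝒳) → S) (s : S) :
    probOf (jointPmf μ f W) (fun ω => φ ω.1) s = probOf (fun v => ∏ i, μ (v i)) φ s := by
  simp only [probOf, Fintype.sum_prod_type]
  refine sum_congr rfl fun v _ => ?_
  split_ifs
  · simp only [jointPmf]
    rw [← mul_sum, sum_pi_prod_eq_one fun j => hW1 (v j) (f v j), mul_one]
  · simp

variable [DecidableEq 𝒳]

theorem ent_jointPmf_coord (hμ1 : ∑ x, μ x = 1) (hW1 : ∀ x a, ∑ y, W x a y = 1) (i : Fin n) :
    ent (jointPmf μ f W) (fun ω => ω.1 i) = ∑ x, negMulLog (μ x) / log 2 :=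
  ent_eq_of_probOf_eq _ _ fun x => (probOf_jointPmf_comp_fst hW1 (fun v => v i) x).trans
    (probOf_pi_apply (t := fun _ => μ) (fun _ => hμ1) i x)

variable [DecidableEq 𝒴]

theorem probOf_jointPmf_coord [DecidableEq 𝒜]
    (hW1 : ∀ x a, ∑ y, W x a y = 1) (i : Fin n) (x : 𝒳) (a : 𝒜) (y : 𝒴) :
    probOf (jointPmf μ f W) (fun ω => ((ω.1 i, f ω.1 i), ω.2 i)) ((x, a), y)
      = probOf (jointPmf μ f W) (fun ω => (ω.1 i, f ω.1 i)) (x, a) * W x a y := by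
  rw [probOf_jointPmf_comp_fst hW1 (fun v => (v i, f v i))]
  simp only [probOf, sum_mul, Fintype.sum_prod_type]
  refine sum_congr rfl fun v _ => ?_
  split_ifs with hv
  · obtain ⟨rfl, rfl⟩ := Prod.mk.inj hv
    have hkernel := probOf_pi_apply (fun j => hW1 (v j) (f v j)) i y
    simp only [probOf] at hkernel
    simp only [jointPmf, Prod.mk.injEq, true_and]
    rw [← hkernel, mul_sum]
    refine sum_congr rfl fun w _ => ?_
    split_ifs <;> simp
  · rw [zero_mul]
    exact sum_eq_zero fun w _ => if_neg fun h => hv (Prod.mk.inj h).1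

theorem ent_jointPmf_coord_output [Fintype 𝒜] [DecidableEq 𝒜]
    (hW1 : ∀ x a, ∑ y, W x a y = 1) (i : Fin n) :
    ent (jointPmf μ f W) (fun ω => ((ω.1 i, ω.2 i), f ω.1 i))
      = ent (jointPmf μ f W) (fun ω => (ω.1 i, f ω.1 i))
          + ∑ ω, jointPmf μ f W ω * channelEnt W (ω.1 i) (f ω.1 i) := by
  let e : (𝒳 × 𝒜) × 𝒴 ≃ (𝒳 × 𝒴) × 𝒜 :=
    (Equiv.prodAssoc 𝒳 𝒜 𝒴).trans
      (((Equiv.refl 𝒳).prodCongr (Equiv.prodComm 𝒜 𝒴)).trans (Equiv.prodAssoc 𝒳 𝒴 𝒜).symm)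
  calc ent (jointPmf μ f W) (fun ω => ((ω.1 i, ω.2 i), f ω.1 i))
      = ent (jointPmf μ f W) (fun ω => e ((ω.1 i, f ω.1 i), ω.2 i)) := rfl
    _ = ent (jointPmf μ f W) (fun ω => ((ω.1 i, f ω.1 i), ω.2 i)) := ent_comp_equiv _ _ e
    _ = _ := by
      rw [ent_pair_eq_add _ _ _ (K := fun xa y => W xa.1 xa.2 y) (fun xa => hW1 xa.1 xa.2)
        fun ⟨x, a⟩ y => probOf_jointPmf_coord hW1 i x a y, sum_probOf_mul]
      rfl

theorem ent_jointPmf (hμ1 : ∑ x, μ x = 1) (hW1 : ∀ x a, ∑ y, W x a y = 1) :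
    ent (jointPmf μ f W) (fun ω => (ω.1, ω.2))
      = ∑ i, (∑ x, negMulLog (μ x) / log 2
          + ∑ ω, jointPmf μ f W ω * channelEnt W (ω.1 i) (f ω.1 i)) := by
  have hfst : ∀ v, probOf (jointPmf μ f W) (fun ω => ω.1) v = ∏ i, μ (v i) := fun v =>
    (probOf_jointPmf_comp_fst hW1 (fun v => v) v).trans (probOf_id _ v)
  have hsrc : ∑ v : Fin n → 𝒳, negMulLog (∏ i, μ (v i)) = ∑ i : Fin n, ∑ x, negMulLog (μ x) :=
    sum_negMulLog_pi_prod (t := fun _ => μ) fun _ => hμ1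
  have hchannel : ∀ v : Fin n → 𝒳,
      ∑ w : Fin n → 𝒴, negMulLog (∏ j, W (v j) (f v j) (w j)) / log 2
        = ∑ i, channelEnt W (v i) (f v i) := fun v => by
    rw [← sum_div, sum_negMulLog_pi_prod fun j => hW1 (v j) (f v j)]
    simp only [channelEnt, sum_div]
  rw [ent_pair_eq_add (jointPmf μ f W) (fun ω => ω.1) (fun ω => ω.2)
      (K := fun v w => ∏ j, W (v j) (f v j) (w j))
      (fun v => sum_pi_prod_eq_one fun j => hW1 (v j) (f v j))
      fun v w => by rw [hfst]; exact probOf_id _ (v, w),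
    sum_probOf_mul, ent_eq_of_probOf_eq _ _ hfst, ← sum_div, hsrc]
  simp only [hchannel, mul_sum, sum_add_distrib, sum_div]
  exact congrArg _ sum_comm

theorem mutInfo_add_condEnt_jointPmf [Fintype 𝒜] [DecidableEq 𝒜]
    (hμ1 : ∑ x, μ x = 1) (hW1 : ∀ x a, ∑ y, W x a y = 1) (i : Fin n) :
    mutInfo (jointPmf μ f W) (fun ω => ω.1 i) (fun ω => f ω.1 i)
        + condEnt (jointPmf μ f W) (fun ω => (ω.1 i, ω.2 i)) (fun ω => f ω.1 i)
      = ∑ x, negMulLog (μ x) / log 2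
          + ∑ ω, jointPmf μ f W ω * channelEnt W (ω.1 i) (f ω.1 i) := by
  simp only [mutInfo, condEnt]
  rw [ent_jointPmf_coord hμ1 hW1, ent_jointPmf_coord_output hW1]
  ring

end ActionDependentSource

theorem stmt_5_general {n : ℕ} {𝒳 𝒜 𝒴 ℳ : Type*}
    [Fintype 𝒳] [DecidableEq 𝒳] [Fintype 𝒜] [DecidableEq 𝒜] [Fintype 𝒴] [DecidableEq 𝒴]
    [Fintype ℳ] [DecidableEq ℳ]
    (μ : 𝒳 → ℝ) (hμ1 : ∑ x, μ x = 1)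
    (f : (Fin n → 𝒳) → (Fin n → 𝒜))
    (W : 𝒳 → 𝒜 → 𝒴 → ℝ) (hW1 : ∀ x a, ∑ y, W x a y = 1)
    (g : (Fin n → 𝒳) × (Fin n → 𝒴) → ℳ) :
    ent (jointPmf μ f W) (fun ω => g ω)
        + condEnt (jointPmf μ f W) (fun ω => (ω.1, ω.2)) (fun ω => g ω)
      ≥ ∑ i : Fin n,
          (mutInfo (jointPmf μ f W) (fun ω => ω.1 i) (fun ω => f ω.1 i)
            + condEnt (jointPmf μ f W) (fun ω => (ω.1 i, ω.2 i)) (fun ω => f ω.1 i)) := by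
  have hjoint : ent (jointPmf μ f W) (fun ω => g ω)
      + condEnt (jointPmf μ f W) (fun ω => (ω.1, ω.2)) (fun ω => g ω)
      = ent (jointPmf μ f W) (fun ω => (ω.1, ω.2)) := by
    rw [condEnt, add_sub_cancel]
    exact ent_pair_comp _ (fun ω : (Fin n → 𝒳) × (Fin n → 𝒴) => (ω.1, ω.2)) g
  rw [hjoint, ent_jointPmf hμ1 hW1]
  exact ge_of_eq (sum_congr rfl fun i _ => (mutInfo_add_condEnt_jointPmf hμ1 hW1 i).symm)

/-- Generalized cut-set bound separating both source nodes from a terminal: under the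
memoryless action-dependent source setup, for `M = g (X^n, Y^n)` with `g` a deterministic
map into a finite set,
`H(M) + H(X^n, Y^n | M) ≥ ∑ i, [ I(X_i ; A_i) + H(X_i, Y_i | A_i) ]`. -/
theorem stmt_5 {n : ℕ} {𝒳 𝒜 𝒴 ℳ : Type*}
    [Fintype 𝒳] [DecidableEq 𝒳] [Fintype 𝒜] [DecidableEq 𝒜] [Fintype 𝒴] [DecidableEq 𝒴]
    [Fintype ℳ] [DecidableEq ℳ]
    (μ : 𝒳 → ℝ) (hμ0 : ∀ x, 0 ≤ μ x) (hμ1 : ∑ x, μ x = 1)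
    (f : (Fin n → 𝒳) → (Fin n → 𝒜))
    (W : 𝒳 → 𝒜 → 𝒴 → ℝ) (hW0 : ∀ x a y, 0 ≤ W x a y) (hW1 : ∀ x a, ∑ y, W x a y = 1)
    (g : (Fin n → 𝒳) × (Fin n → 𝒴) → ℳ) :
    ent (jointPmf μ f W) (fun ω => g ω)
        + condEnt (jointPmf μ f W) (fun ω => (ω.1, ω.2)) (fun ω => g ω)
      ≥ ∑ i : Fin n,
          (mutInfo (jointPmf μ f W) (fun ω => ω.1 i) (fun ω => f ω.1 i)
            + condEnt (jointPmf μ f W) (fun ω => (ω.1 i, ω.2 i)) (fun ω => f ω.1 i)) :=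
  stmt_5_general μ hμ1 f W hW1 g
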